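/- Denominator bound (case b): let q = 1/d with |d| ≥ 2 an integer, t = u/v with gcd(u,v) = 1, v ≥ 1, 0 < |t| < 1, N ∈ ℤ, M = d^s with s ∈ ℤ_+. If K > n assume s ≥ K(K−1)/2 − n(n+1)/2. Then v^{n+K} |d|^{δ_{n,K}} · (N A_n(q^K t) − d^s (t)_K B_n(q^K t)) ∈ ℤ, where δ_{n,K} = (K^2−K)/2 + (3n^2+n)/2 if 0 ≤ K ≤ n and δ_{n,K} = n^2 + nK if K > n. -/

import Mathlib

open Finset

/-- q-Pochhammer symbol `(a)_n = ∏_{j=0}^{n-1} (1 - a q^j)`. -/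
noncomputable def qPoch (q a : ℝ) (n : ℕ) : ℝ := ∏ j ∈ Finset.range n, (1 - a * q ^ j)

/-- q-exponential `E_q(t) = ∏_{k=0}^∞ (1 - q^k t)⁻¹`. -/
noncomputable def qExp (q t : ℝ) : ℝ := ∏' k : ℕ, (1 - q ^ k * t)⁻¹

/-- q-binomial coefficient. -/
noncomputable def qBinom (q : ℝ) (n k : ℕ) : ℝ :=
  qPoch q q n / (qPoch q q k * qPoch q q (n - k))

/-- Padé numerator polynomial `A_n(t)`. -/
noncomputable def padeA (q : ℝ) (n : ℕ) (t : ℝ) : ℝ :=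
  ∑ k ∈ Finset.range (n + 1),
    qBinom q n k * q ^ (k * n) * qPoch q (q ^ (n + 1)) (n - k) * t ^ k

/-- Padé denominator polynomial `B_n(t)`. -/
noncomputable def padeB (q : ℝ) (n : ℕ) (t : ℝ) : ℝ :=
  ∑ k ∈ Finset.range (n + 1),
    qBinom q n k * q ^ (k * (k - 1) / 2) * qPoch q (q ^ (n + 1)) (n - k) * (-t) ^ k

/-- Padé remainder `S_n(t)`. -/
noncomputable def padeS (q : ℝ) (n : ℕ) (t : ℝ) : ℝ :=
  (-1) ^ n * t ^ (2 * n + 1) * q ^ ((3 * n ^ 2 + n) / 2) *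
    (qPoch q q n / qPoch q q (2 * n + 1)) *
    ∑' k : ℕ, qPoch q (q ^ (n + 1)) k * t ^ k / (qPoch q q k * qPoch q (q ^ (2 * n + 2)) k)

/-- Exponent `δ_{n,K}` in case (b). -/
def deltaB (n K : ℕ) : ℕ :=
  if K ≤ n then (K ^ 2 - K) / 2 + (3 * n ^ 2 + n) / 2 else n ^ 2 + n * K

/-! With `q = 1/d` and `t = u/v`, every summand of `A_n(q^K t)` and of `(t)_K B_n(q^K t)` is a
product of factors with explicit denominators: `d^{k(n-k)}` clears the Gaussian binomial
`[n, k]_q` (induction on the q-Pascal rule), `d^m` clears `q^m`, `d^{m+j}` clears `1 - q^{m+j}`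
and `v d^j` clears `1 - t q^j`. The total power of `d` in a summand is then at most `δ_{n,K}`
for `A_n`, and at most `δ_{n,K} + s` for `(t)_K B_n`, the extra `d^s` absorbing the excess when
`K > n`. -/

def ClearsDenom (D : ℤ) (x : ℝ) : Prop := ∃ z : ℤ, (z : ℝ) = D * x

namespace ClearsDenom

variable {D E : ℤ} {x y : ℝ}

lemma one : ClearsDenom D 1 := ⟨D, by simp⟩

lemma of_dvd (h : ClearsDenom D x) (hDE : D ∣ E) : ClearsDenom E x := by
  obtain ⟨z, hz⟩ := h
  obtain ⟨c, rfl⟩ := hDE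
  exact ⟨c * z, by push_cast; rw [hz]; ring⟩

lemma add (hx : ClearsDenom D x) (hy : ClearsDenom D y) : ClearsDenom D (x + y) := by
  obtain ⟨z, hz⟩ := hx
  obtain ⟨w, hw⟩ := hy
  exact ⟨z + w, by push_cast; rw [hz, hw]; ring⟩

lemma sub (hx : ClearsDenom D x) (hy : ClearsDenom D y) : ClearsDenom D (x - y) := by
  obtain ⟨z, hz⟩ := hx
  obtain ⟨w, hw⟩ := hy
  exact ⟨z - w, by push_cast; rw [hz, hw]; ring⟩

lemma mul (hx : ClearsDenom D x) (hy : ClearsDenom E y) : ClearsDenom (D * E) (x * y) := by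
  obtain ⟨z, hz⟩ := hx
  obtain ⟨w, hw⟩ := hy
  exact ⟨z * w, by push_cast; rw [hz, hw]; ring⟩

lemma neg (hx : ClearsDenom D x) : ClearsDenom D (-x) := by
  obtain ⟨z, hz⟩ := hx
  exact ⟨-z, by push_cast; rw [hz]; ring⟩

lemma intCast_mul (hx : ClearsDenom D x) (N : ℤ) : ClearsDenom D (N * x) := by
  obtain ⟨z, hz⟩ := hx
  exact ⟨N * z, by push_cast; rw [hz]; ring⟩

lemma pow (hx : ClearsDenom D x) (k : ℕ) : ClearsDenom (D ^ k) (x ^ k) := by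
  obtain ⟨z, hz⟩ := hx
  exact ⟨z ^ k, by push_cast; rw [hz, mul_pow]⟩

lemma sum {ι : Type*} {s : Finset ι} {f : ι → ℝ} (hf : ∀ i ∈ s, ClearsDenom D (f i)) :
    ClearsDenom D (∑ i ∈ s, f i) := by
  classical
  induction s using Finset.induction_on with
  | empty => exact ⟨0, by simp⟩
  | insert i s hi ih =>
    rw [sum_insert hi]
    exact (hf i (mem_insert_self i s)).add (ih fun j hj => hf j (mem_insert_of_mem hj))

lemma prod {ι : Type*} {s : Finset ι} {g : ι → ℤ} {f : ι → ℝ}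
    (hf : ∀ i ∈ s, ClearsDenom (g i) (f i)) :
    ClearsDenom (∏ i ∈ s, g i) (∏ i ∈ s, f i) := by
  classical
  induction s using Finset.induction_on with
  | empty => exact ⟨1, by simp⟩
  | insert i s hi ih =>
    rw [prod_insert hi, prod_insert hi]
    exact (hf i (mem_insert_self i s)).mul (ih fun j hj => hf j (mem_insert_of_mem hj))

lemma one_div_pow {d : ℤ} (hd : d ≠ 0) (m : ℕ) : ClearsDenom (d ^ m) ((1 / (d : ℝ)) ^ m) :=
  ⟨1, by push_cast; rw [← mul_pow, mul_one_div_cancel (Int.cast_ne_zero.2 hd), one_pow]⟩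

end ClearsDenom

section QBinom

variable {q : ℝ}

lemma qPoch_zero (a : ℝ) : qPoch q a 0 = 1 := prod_range_zero _

lemma qPoch_succ (a : ℝ) (r : ℕ) : qPoch q a (r + 1) = qPoch q a r * (1 - a * q ^ r) :=
  prod_range_succ _ _

lemma qPoch_self_succ (r : ℕ) : qPoch q q (r + 1) = qPoch q q r * (1 - q ^ (r + 1)) := by
  rw [qPoch_succ, pow_succ']

variable (hq : ∀ m : ℕ, 0 < m → q ^ m ≠ 1)
include hq

lemma one_sub_pow_ne_zero {m : ℕ} (hm : 0 < m) : 1 - q ^ m ≠ 0 :=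
  sub_ne_zero.2 (hq m hm).symm

lemma qPoch_self_ne_zero (r : ℕ) : qPoch q q r ≠ 0 := by
  induction r with
  | zero => simp [qPoch_zero]
  | succ r ih =>
    rw [qPoch_self_succ]
    exact mul_ne_zero ih (one_sub_pow_ne_zero hq r.succ_pos)

lemma qBinom_zero_right (n : ℕ) : qBinom q n 0 = 1 := by
  rw [qBinom, qPoch_zero, one_mul, Nat.sub_zero, div_self (qPoch_self_ne_zero hq n)]

lemma qBinom_self (n : ℕ) : qBinom q n n = 1 := by
  rw [qBinom, Nat.sub_self, qPoch_zero, mul_one, div_self (qPoch_self_ne_zero hq n)]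

lemma qBinom_succ_succ {n k : ℕ} (hk : k < n) :
    qBinom q (n + 1) (k + 1) = q ^ (k + 1) * qBinom q n (k + 1) + qBinom q n k := by
  obtain ⟨b, rfl⟩ : ∃ b, n = k + 1 + b := ⟨n - (k + 1), by omega⟩
  rw [qBinom, qBinom, qBinom, show k + 1 + b + 1 - (k + 1) = b + 1 by omega,
    show k + 1 + b - (k + 1) = b by omega, show k + 1 + b - k = b + 1 by omega,
    qPoch_self_succ (k + 1 + b), qPoch_self_succ k, qPoch_self_succ b]
  have := qPoch_self_ne_zero hq
  have := one_sub_pow_ne_zero hq (m := k + 1) (by omega)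
  have := one_sub_pow_ne_zero hq (m := b + 1) (by omega)
  field_simp
  ring

end QBinom

section Integrality

variable {d : ℤ}

lemma clearsDenom_qBinom (hq : ∀ m : ℕ, 0 < m → (1 / (d : ℝ)) ^ m ≠ 1) (hd : d ≠ 0) :
    ∀ {n k : ℕ}, k ≤ n → ClearsDenom (d ^ (k * (n - k))) (qBinom (1 / (d : ℝ)) n k)
  | _, 0, _ => by rw [qBinom_zero_right hq, zero_mul, pow_zero]; exact ClearsDenom.one
  | 0, _ + 1, hk => by omega
  | n + 1, k + 1, hk => by
    by_cases hkn : k = n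
    · rw [hkn, qBinom_self hq, Nat.sub_self, mul_zero, pow_zero]; exact ClearsDenom.one
    rw [qBinom_succ_succ hq (by omega)]
    obtain ⟨b, rfl⟩ : ∃ b, n = k + 1 + b := ⟨n - (k + 1), by omega⟩
    have hleft := (ClearsDenom.one_div_pow hd (k + 1)).mul
      (clearsDenom_qBinom hq hd (n := k + 1 + b) (k := k + 1) (by omega))
    have hright := clearsDenom_qBinom hq hd (n := k + 1 + b) (k := k) (by omega)
    rw [show k + 1 + b - (k + 1) = b by omega, ← pow_add] at hleft
    rw [show k + 1 + b - k = b + 1 by omega] at hright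
    rw [show k + 1 + b + 1 - (k + 1) = b + 1 by omega]
    exact (hleft.of_dvd (pow_dvd_pow d (le_of_eq (by ring)))).add
      (hright.of_dvd (pow_dvd_pow d (Nat.mul_le_mul_right _ k.le_succ)))

lemma clearsDenom_qPoch_one_div_pow (hd : d ≠ 0) (m r : ℕ) :
    ClearsDenom (d ^ ∑ j ∈ range r, (m + j))
      (qPoch (1 / (d : ℝ)) ((1 / (d : ℝ)) ^ m) r) := by
  rw [qPoch, ← prod_pow_eq_pow_sum]
  refine ClearsDenom.prod fun j _ => ?_
  rw [← pow_add]
  exact ClearsDenom.one.sub (ClearsDenom.one_div_pow hd _)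

lemma clearsDenom_one_div_pow_mul_div (hd : d ≠ 0) (u : ℤ) {v : ℕ} (hv : v ≠ 0) (m : ℕ) :
    ClearsDenom (v * d ^ m) ((1 / (d : ℝ)) ^ m * (u / v)) := by
  refine ⟨u, ?_⟩
  have hd' : (d : ℝ) ≠ 0 := Int.cast_ne_zero.2 hd
  have hv' : (v : ℝ) ≠ 0 := Nat.cast_ne_zero.2 hv
  push_cast
  rw [one_div, inv_pow]
  field_simp

lemma clearsDenom_qPoch_div (hd : d ≠ 0) (u : ℤ) {v : ℕ} (hv : v ≠ 0) (K : ℕ) :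
    ClearsDenom (v ^ K * d ^ ∑ j ∈ range K, j) (qPoch (1 / (d : ℝ)) (u / v) K) := by
  rw [qPoch, ← prod_pow_eq_pow_sum, pow_eq_prod_const (v : ℤ), ← prod_mul_distrib]
  refine ClearsDenom.prod fun j _ => ClearsDenom.one.sub ?_
  rw [mul_comm ((u : ℝ) / v)]
  exact clearsDenom_one_div_pow_mul_div hd u hv j

end Integrality

lemma two_mul_sum_range_id_add (r : ℕ) : 2 * ∑ i ∈ range r, i + r = r ^ 2 := by
  induction r with
  | zero => simp
  | succ r ih => rw [sum_range_succ]; nlinarith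

lemma sum_range_natCast_id (r : ℕ) : ∑ i ∈ range r, (i : ℤ) = r * (r - 1) / 2 := by
  have h : (r : ℤ) * (r - 1) = 2 * ∑ i ∈ range r, (i : ℤ) := by
    have := two_mul_sum_range_id_add r
    zify at this
    linarith
  rw [h, Int.mul_ediv_cancel_left _ two_ne_zero]

lemma sum_range_add_left (m r : ℕ) :
    ∑ j ∈ range r, (m + j) = r * m + ∑ j ∈ range r, j := by
  rw [sum_add_distrib, sum_const, card_range, smul_eq_mul]

lemma two_mul_deltaB_add_of_le {n K : ℕ} (h : K ≤ n) :
    2 * deltaB n K + K = K ^ 2 + 3 * n ^ 2 + n := by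
  have hK : 2 * ((K ^ 2 - K) / 2) + K = K ^ 2 := by
    rw [sq, ← Nat.mul_sub_one, ← sum_range_id, two_mul_sum_range_id_add, sq]
  have hn : 2 * ((3 * n ^ 2 + n) / 2) = 3 * n ^ 2 + n := by
    have := two_mul_sum_range_id_add (n + 1)
    rw [sum_range_id, Nat.add_sub_cancel] at this
    have e₁ : (n + 1) ^ 2 = (n + 1) * n + (n + 1) := by ring
    have e₂ : (n + 1) * n = n ^ 2 + n := by ring
    omega
  rw [deltaB, if_pos h]
  omega

lemma deltaB_of_lt {n K : ℕ} (h : n < K) : deltaB n K = n ^ 2 + n * K := by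
  rw [deltaB, if_neg (not_le.2 h)]

lemma padeA_exponent_le {n k : ℕ} (hk : k ≤ n) (K : ℕ) :
    k * (n - k) + k * n + ∑ j ∈ range (n - k), (n + 1 + j) + K * k ≤ deltaB n K := by
  obtain ⟨j, rfl⟩ : ∃ j, n = k + j := ⟨n - k, by omega⟩
  rw [Nat.add_sub_cancel_left, sum_range_add_left]
  have hj := two_mul_sum_range_id_add j
  rcases le_or_gt K (k + j) with hK | hK
  · have hδ := two_mul_deltaB_add_of_le hK
    -- 2 (δ - exponent) = (K - k) (K - k - 1)
    nlinarith [Int.le_self_sq ((K : ℤ) - k)]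
  · rw [deltaB_of_lt hK]
    nlinarith

lemma padeB_exponent_le {n k : ℕ} (hk : k ≤ n) {K s : ℕ}
    (hs : n < K → ∑ i ∈ range K, i ≤ s + ∑ i ∈ range (n + 1), i) :
    ∑ i ∈ range K, i +
        (k * (n - k) + k * (k - 1) / 2 + ∑ j ∈ range (n - k), (n + 1 + j) + K * k)
      ≤ deltaB n K + s := by
  obtain ⟨j, rfl⟩ : ∃ j, n = k + j := ⟨n - k, by omega⟩
  rw [Nat.add_sub_cancel_left, sum_range_add_left, ← sum_range_id]
  have hj := two_mul_sum_range_id_add j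
  have hk := two_mul_sum_range_id_add k
  have hK := two_mul_sum_range_id_add K
  rcases le_or_gt K (k + j) with hKn | hKn
  · have hδ := two_mul_deltaB_add_of_le hKn
    nlinarith
  · rw [deltaB_of_lt hKn]
    have := hs hKn
    have := two_mul_sum_range_id_add (k + j + 1)
    nlinarith

lemma sum_range_id_le_add_of_sub_le {n K s : ℕ}
    (h : ((K : ℤ) * (K - 1)) / 2 - ((n : ℤ) * (n + 1)) / 2 ≤ (s : ℤ)) :
    ∑ i ∈ range K, i ≤ s + ∑ i ∈ range (n + 1), i := by
  zify
  rw [sum_range_natCast_id, sum_range_natCast_id]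
  push_cast
  rw [add_sub_cancel_right, mul_comm _ (n : ℤ)]
  linarith

section Denominators

variable {d : ℤ}

lemma ne_zero_of_two_le_abs (hd : 2 ≤ |d|) : d ≠ 0 := by
  rintro rfl
  simp at hd

lemma one_div_pow_ne_one (hd : 2 ≤ |d|) (m : ℕ) (hm : 0 < m) : (1 / (d : ℝ)) ^ m ≠ 1 := by
  intro h
  have habs : |1 / (d : ℝ)| = 1 := by
    rw [← pow_eq_one_iff_of_nonneg (abs_nonneg _) hm.ne', ← abs_pow, h, abs_one]
  have hd' : (2 : ℝ) ≤ |(d : ℝ)| := by exact_mod_cast hd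
  rw [abs_div, abs_one, div_eq_one_iff_eq (by positivity)] at habs
  linarith

lemma pow_dvd_abs_pow {b b' : ℕ} (h : b ≤ b') : d ^ b ∣ |d| ^ b' :=
  (pow_dvd_pow d h).trans (pow_dvd_pow_of_dvd (self_dvd_abs d) b')

variable (hd : 2 ≤ |d|) (u : ℤ) {v : ℕ} (hv : v ≠ 0)
include hd hv

lemma clearsDenom_padeA (n K : ℕ) :
    ClearsDenom (v ^ (n + K) * |d| ^ deltaB n K)
      (padeA (1 / (d : ℝ)) n ((1 / (d : ℝ)) ^ K * (u / v))) := by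
  have hd0 := ne_zero_of_two_le_abs hd
  refine ClearsDenom.sum fun k hk => ?_
  have hkn : k ≤ n := Nat.lt_succ_iff.1 (mem_range.1 hk)
  refine ((((clearsDenom_qBinom (one_div_pow_ne_one hd) hd0 hkn).mul
    (ClearsDenom.one_div_pow hd0 (k * n))).mul
      (clearsDenom_qPoch_one_div_pow hd0 (n + 1) (n - k))).mul
        ((clearsDenom_one_div_pow_mul_div hd0 u hv K).pow k)).of_dvd ?_
  calc _ = (v : ℤ) ^ k *
        d ^ (k * (n - k) + k * n + ∑ j ∈ range (n - k), (n + 1 + j) + K * k) := by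
        ring
    _ ∣ _ := mul_dvd_mul (pow_dvd_pow _ (by omega)) (pow_dvd_abs_pow (padeA_exponent_le hkn K))

lemma clearsDenom_pow_mul_qPoch_mul_padeB {n K s : ℕ}
    (hs : n < K → ∑ i ∈ range K, i ≤ s + ∑ i ∈ range (n + 1), i) :
    ClearsDenom (v ^ (n + K) * |d| ^ deltaB n K)
      ((d : ℝ) ^ s * qPoch (1 / (d : ℝ)) (u / v) K *
        padeB (1 / (d : ℝ)) n ((1 / (d : ℝ)) ^ K * (u / v))) := by
  have hd0 := ne_zero_of_two_le_abs hd
  suffices h : ClearsDenom (v ^ (n + K) * |d| ^ deltaB n K * d ^ s)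
      (qPoch (1 / (d : ℝ)) (u / v) K * padeB (1 / (d : ℝ)) n ((1 / (d : ℝ)) ^ K * (u / v))) by
    obtain ⟨z, hz⟩ := h
    exact ⟨z, by rw [hz]; push_cast; ring⟩
  rw [padeB, mul_sum]
  refine ClearsDenom.sum fun k hk => ?_
  have hkn : k ≤ n := Nat.lt_succ_iff.1 (mem_range.1 hk)
  refine ((clearsDenom_qPoch_div hd0 u hv K).mul
    ((((clearsDenom_qBinom (one_div_pow_ne_one hd) hd0 hkn).mul
      (ClearsDenom.one_div_pow hd0 (k * (k - 1) / 2))).mul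
        (clearsDenom_qPoch_one_div_pow hd0 (n + 1) (n - k))).mul
          ((clearsDenom_one_div_pow_mul_div hd0 u hv K).neg.pow k))).of_dvd ?_
  calc _ = (v : ℤ) ^ (K + k) * d ^ (∑ i ∈ range K, i + (k * (n - k) + k * (k - 1) / 2 +
        ∑ j ∈ range (n - k), (n + 1 + j) + K * k)) := by
        ring
    _ ∣ _ := by
      rw [mul_assoc, add_comm n K]
      refine mul_dvd_mul (pow_dvd_pow _ (by omega)) ?_
      refine (pow_dvd_pow d (padeB_exponent_le hkn hs)).trans ?_
      rw [pow_add]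
      exact mul_dvd_mul_right (pow_dvd_abs_pow le_rfl) _

end Denominators

theorem denominator_bound_case_b_general (d : ℤ) (hd : 2 ≤ |d|) (u : ℤ) (v : ℕ) (hv : 1 ≤ v)
    (N : ℤ) (s : ℕ) (n K : ℕ)
    (hsK : n < K → ((K : ℤ) * (K - 1)) / 2 - ((n : ℤ) * (n + 1)) / 2 ≤ (s : ℤ)) :
    ∃ z : ℤ, (z : ℝ) =
      (v : ℝ) ^ (n + K) * |(d : ℝ)| ^ deltaB n K *
        ((N : ℝ) * padeA (1 / (d : ℝ)) n ((1 / (d : ℝ)) ^ K * ((u : ℝ) / v)) -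
          (d : ℝ) ^ s * qPoch (1 / (d : ℝ)) ((u : ℝ) / v) K *
            padeB (1 / (d : ℝ)) n ((1 / (d : ℝ)) ^ K * ((u : ℝ) / v))) := by
  have hv0 : v ≠ 0 := by omega
  obtain ⟨z, hz⟩ := ((clearsDenom_padeA hd u hv0 n K).intCast_mul N).sub
    (clearsDenom_pow_mul_qPoch_mul_padeB hd u hv0 fun h => sum_range_id_le_add_of_sub_le (hsK h))
  exact ⟨z, by rw [hz]; push_cast; ring⟩

/-- denominator bound, case (b), with `M = d^s` and, when `K > n`,
`s ≥ K(K-1)/2 - n(n+1)/2`. -/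
theorem denominator_bound_case_b (d : ℤ) (hd : 2 ≤ |d|) (u : ℤ) (v : ℕ) (hv : 1 ≤ v)
    (hco : Int.gcd u v = 1) (ht0 : 0 < |(u : ℝ) / v|) (ht1 : |(u : ℝ) / v| < 1)
    (N : ℤ) (s : ℕ) (hs : 1 ≤ s) (n K : ℕ)
    (hsK : n < K → ((K : ℤ) * (K - 1)) / 2 - ((n : ℤ) * (n + 1)) / 2 ≤ (s : ℤ)) :
    ∃ z : ℤ, (z : ℝ) =
      (v : ℝ) ^ (n + K) * |(d : ℝ)| ^ deltaB n K *
        ((N : ℝ) * padeA (1 / (d : ℝ)) n ((1 / (d : ℝ)) ^ K * ((u : ℝ) / v)) -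
          (d : ℝ) ^ s * qPoch (1 / (d : ℝ)) ((u : ℝ) / v) K *
            padeB (1 / (d : ℝ)) n ((1 / (d : ℝ)) ^ K * ((u : ℝ) / v))) :=
  denominator_bound_case_b_general d hd u v hv N s n K hsK
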